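/- Trivial peripheral point-spectrum of the environment-process operator: assume the recurrence hypothesis. If g ∈ L^∞(Ω_𝔎,Q) satisfies Rg = −g Q-almost everywhere, then g = 0 Q-almost everywhere; that is, −1 is not an eigenvalue of R viewed as an operator on L^∞(Ω_𝔎,Q). -/

import Mathlib

open MeasureTheory Filter

noncomputable section

/-- The lattice `ℤ^d`. -/
abbrev ZLat (d : ℕ) := Fin d → ℤ

/-- The space of uniformly elliptic environments. -/
abbrev EnvSpace (d K : ℕ) := ZLat d → (Set.Icc (2:ℤ) (K:ℤ) × Set.Icc (2:ℤ) (K:ℤ))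

/-- The shift `T j`. -/
def shiftT {d K : ℕ} (j : ZLat d) (e : EnvSpace d K) : EnvSpace d K := fun i => e (i + j)

/-- Size of the active population at `i`, as a real number. -/
def Nsize {d K : ℕ} (e : EnvSpace d K) (i : ZLat d) : ℝ := ((e i).1 : ℤ)

/-- Size of the dormant population at `i`, as a real number. -/
def Msize {d K : ℕ} (e : EnvSpace d K) (i : ZLat d) : ℝ := ((e i).2 : ℤ)

/-- Total migration rate `c := Σ_{i ≠ 0} a(0,i)`. -/
def cRate {d : ℕ} (a : ZLat d → ZLat d → ℝ) : ℝ := ∑' i : ZLat d, if i = 0 then 0 else a 0 i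

/-- The probability `q_s` of becoming dormant. -/
def qs {d : ℕ} (a : ZLat d → ZLat d → ℝ) (lam : ℝ) (K : ℕ) : ℝ :=
  lam / (cRate a + lam + lam * K)

/-- The step distribution `p̂`. -/
def phat {d : ℕ} (a : ZLat d → ZLat d → ℝ) (lam : ℝ) (K : ℕ) (i : ZLat d) : ℝ :=
  if i = 0 then lam * K / (cRate a + lam * K) else a 0 i / (cRate a + lam * K)

/-- The wake-up probabilities `ω_e(i)`. -/
def omegaE {d K : ℕ} (a : ZLat d → ZLat d → ℝ) (lam : ℝ) (e : EnvSpace d K) (i : ZLat d) : ℝ :=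
  lam * Nsize e i / (Msize e i * (cRate a + lam + lam * K))

/-- `n`-fold convolution power of a function on `ℤ^d`. -/
def convPow {d : ℕ} (p : ZLat d → ℝ) : ℕ → ZLat d → ℝ
  | 0 => fun i => if i = 0 then 1 else 0
  | n + 1 => fun i => ∑' j : ZLat d, convPow p n j * p (i - j)

/-- The Markov operator `R` of the auxiliary environment process. -/
def Rop {d K : ℕ} (a : ZLat d → ZLat d → ℝ) (lam : ℝ)
    (f : EnvSpace d K × Bool → ℝ) : EnvSpace d K × Bool → ℝ := fun x =>
  match x with
  | (e, true) => qs a lam K * f (e, false)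
      + (1 - qs a lam K) * ∑' j : ZLat d, phat a lam K j * f (shiftT j e, true)
  | (e, false) => omegaE a lam e 0 * f (e, true) + (1 - omegaE a lam e 0) * f (e, false)

/-- The strip `G = ℤ^d × {0,1}`. -/
abbrev Gstrip (d : ℕ) := ZLat d × Bool

/-- One-step transition kernel of the subordinate Markov chain in environment `e`. -/
def QK {d K : ℕ} (a : ZLat d → ZLat d → ℝ) (lam : ℝ) (e : EnvSpace d K) :
    Gstrip d → Gstrip d → ℝ
  | (i, true), (j, true) => (1 - qs a lam K) * phat a lam K (j - i)
  | (i, true), (j, false) => if j = i then qs a lam K else 0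
  | (i, false), (j, true) => if j = i then omegaE a lam e i else 0
  | (i, false), (j, false) => if j = i then 1 - omegaE a lam e i else 0

/-- `n`-step transition kernel of the subordinate Markov chain. -/
def QKn {d K : ℕ} (a : ZLat d → ZLat d → ℝ) (lam : ℝ) (e : EnvSpace d K) :
    ℕ → Gstrip d → Gstrip d → ℝ
  | 0 => fun η ξ => if ξ = η then 1 else 0
  | n + 1 => fun η ξ => ∑' ζ : Gstrip d, QKn a lam e n η ζ * QK a lam e ζ ξ

/-- Time-`t` transition kernel of the single-particle dual (uniformization representation). -/
def ptk {d K : ℕ} (a : ZLat d → ZLat d → ℝ) (lam : ℝ) (e : EnvSpace d K) (t : ℝ)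
    (η ξ : Gstrip d) : ℝ :=
  Real.exp (-((cRate a + lam + lam * K) * t)) *
    ∑' n : ℕ, ((cRate a + lam + lam * K) * t) ^ n / (n.factorial : ℝ) * QKn a lam e n η ξ

end

/-! Null sets of `Q` are exactly the sets whose two slices are `P̄`-null, so the eigenvalue equation
can be read slice by slice under `P̄`. The dormant step is lazy (`ω ≤ 1/2`), so a `(-1)`-eigenfunction
has dormant component at most a third of its active component. The active component at `e` is a
mixture, with weight `q_s`, of the dormant component and a `p̂`-average of its own shifts; by shift
invariance of `P̄`, an a.e. bound `B` on the active component holds for all shifts too, which improves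
it to `(1 - 2 q_s / 3) B`. Iterating, both components vanish. -/

section Measure

variable {α : Type*} [MeasurableSpace α]

lemma ae_iff_forall_ae_prodMk {μ : Measure (α × Bool)} {ν : Measure α}
    (h : ∀ b (A : Set α), MeasurableSet A → (μ (A ×ˢ {b}) = 0 ↔ ν A = 0))
    {p : α × Bool → Prop} :
    (∀ᵐ x ∂μ, p x) ↔ ∀ b, ∀ᵐ a ∂ν, p (a, b) := by
  have slice_null : ∀ b (T : Set α), μ (T ×ˢ {b}) = 0 ↔ ν T = 0 := by
    intro b T
    constructor
    · intro hT
      have hU : ν ((·, b) ⁻¹' toMeasurable μ (T ×ˢ {b})) = 0 := by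
        refine (h b _ ((measurableSet_toMeasurable _ _).preimage measurable_prodMk_right)).1 ?_
        refine measure_mono_null (fun x hx => ?_) ((measure_toMeasurable _).trans hT)
        obtain ⟨hx, rfl⟩ := hx
        exact hx
      exact measure_mono_null
        (fun x hx => subset_toMeasurable μ (T ×ˢ {b}) (Set.mk_mem_prod hx rfl)) hU
    · intro hT
      exact measure_mono_null (Set.prod_mono (subset_toMeasurable ν T) le_rfl)
        ((h b _ (measurableSet_toMeasurable _ _)).2 ((measure_toMeasurable _).trans hT))
  have hdecomp : {x | ¬ p x} = ⋃ b, {a | ¬ p (a, b)} ×ˢ {b} := by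
    ext ⟨a, b⟩
    simp
  simp only [ae_iff, hdecomp, measure_iUnion_null_iff, slice_null]

lemma ae_eq_zero_of_ae_abs_le_contract {μ : Measure α} {f : α → ℝ} {θ C : ℝ}
    (hθ₀ : 0 ≤ θ) (hθ₁ : θ < 1) (hC : ∀ᵐ x ∂μ, |f x| ≤ C)
    (hcontract : ∀ B, (∀ᵐ x ∂μ, |f x| ≤ B) → ∀ᵐ x ∂μ, |f x| ≤ θ * B) :
    ∀ᵐ x ∂μ, f x = 0 := by
  have hpow : ∀ n : ℕ, ∀ᵐ x ∂μ, |f x| ≤ θ ^ n * C := by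
    intro n
    induction n with
    | zero => simpa using hC
    | succ n ih => simpa [pow_succ, mul_comm, mul_left_comm] using hcontract _ ih
  have hlim : Filter.Tendsto (fun n : ℕ => θ ^ n * C) Filter.atTop (nhds 0) := by
    simpa using (tendsto_pow_atTop_nhds_zero_of_lt_one hθ₀ hθ₁).mul_const C
  filter_upwards [ae_all_iff.2 hpow] with x hx
  exact abs_nonpos_iff.1 (ge_of_tendsto hlim (Filter.Eventually.of_forall hx))

lemma setIntegral_eq_zero_iff_of_pos {μ : Measure α} {f : α → ℝ} {s : Set α} (hf : ∀ x, 0 < f x)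
    (hfi : IntegrableOn f s μ) : ∫ x in s, f x ∂μ = 0 ↔ μ s = 0 := by
  have hpos := setIntegral_pos_iff_support_of_nonneg_ae (.of_forall fun x => (hf x).le) hfi
  rw [Function.support_eq_univ fun x => (hf x).ne', Set.univ_inter] at hpos
  have hI : 0 ≤ ∫ x in s, f x ∂μ := integral_nonneg fun x => (hf x).le
  constructor
  · intro h
    by_contra hs
    exact (hpos.2 (pos_iff_ne_zero.2 hs)).ne' h
  · intro h
    exact le_antisymm (not_lt.1 fun hlt => (hpos.1 hlt).ne' h) hI

end Measure

lemma abs_tsum_mul_le_of_hasSum_one {ι : Type*} {p f : ι → ℝ} {B : ℝ} (hp₀ : ∀ i, 0 ≤ p i)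
    (hp : HasSum p 1) (hf : ∀ i, |f i| ≤ B) : |∑' i, p i * f i| ≤ B := by
  have hbound : ∀ i, ‖p i * f i‖ ≤ p i * B := fun i => by
    rw [norm_mul, Real.norm_of_nonneg (hp₀ i), Real.norm_eq_abs]
    exact mul_le_mul_of_nonneg_left (hf i) (hp₀ i)
  have hsum : Summable fun i => ‖p i * f i‖ :=
    .of_nonneg_of_le (fun _ => norm_nonneg _) hbound (hp.summable.mul_right B)
  calc |∑' i, p i * f i| ≤ ∑' i, ‖p i * f i‖ := norm_tsum_le_tsum_norm hsum
    _ ≤ ∑' i, p i * B := hsum.tsum_le_tsum hbound (hp.summable.mul_right B)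
    _ = B := by rw [tsum_mul_right, hp.tsum_eq, one_mul]

lemma three_mul_abs_le_of_lazy_eq_neg {w x y : ℝ} (hw₀ : 0 ≤ w) (hw : w ≤ 1 / 2)
    (h : w * y + (1 - w) * x = -x) : 3 * |x| ≤ |y| := by
  have hxy : (2 - w) * |x| = w * |y| := by
    have := congrArg abs (show (2 - w) * x = -(w * y) by linear_combination h)
    rwa [abs_mul, abs_neg, abs_mul, abs_of_pos (by linarith), abs_of_nonneg hw₀] at this
  nlinarith [abs_nonneg x, abs_nonneg y]

section Environment

variable {d K : ℕ}

lemma two_le_Nsize (e : EnvSpace d K) (i : ZLat d) : 2 ≤ Nsize e i := by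
  unfold Nsize
  exact_mod_cast (e i).1.2.1

lemma Nsize_le (e : EnvSpace d K) (i : ZLat d) : Nsize e i ≤ K := by
  unfold Nsize
  exact_mod_cast (e i).1.2.2

lemma two_le_Msize (e : EnvSpace d K) (i : ZLat d) : 2 ≤ Msize e i := by
  unfold Msize
  exact_mod_cast (e i).2.2.1

lemma Msize_le (e : EnvSpace d K) (i : ZLat d) : Msize e i ≤ K := by
  unfold Msize
  exact_mod_cast (e i).2.2.2

lemma measurable_Msize_div_Nsize (i : ZLat d) :
    Measurable fun e : EnvSpace d K => Msize e i / Nsize e i := by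
  have hcast : Measurable fun n : Set.Icc (2 : ℤ) K => ((n : ℤ) : ℝ) :=
    measurable_from_top.comp measurable_subtype_coe
  exact (hcast.comp (measurable_snd.comp (measurable_pi_apply i))).div
    (hcast.comp (measurable_fst.comp (measurable_pi_apply i)))

lemma Msize_div_Nsize_pos (e : EnvSpace d K) (i : ZLat d) : 0 < Msize e i / Nsize e i := by
  have := two_le_Msize e i
  have := two_le_Nsize e i
  positivity

lemma integrable_Msize_div_Nsize (μ : Measure (EnvSpace d K)) [IsFiniteMeasure μ] (i : ZLat d) :
    Integrable (fun e => Msize e i / Nsize e i) μ := by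
  refine .mono' (integrable_const (K : ℝ)) (measurable_Msize_div_Nsize i).aestronglyMeasurable
    (.of_forall fun e => ?_)
  have hN := two_le_Nsize e i
  rw [Real.norm_of_nonneg (Msize_div_Nsize_pos e i).le, div_le_iff₀ (by linarith)]
  nlinarith [Msize_le e i, two_le_Msize e i]

lemma measurable_shiftT (j : ZLat d) : Measurable (shiftT (K := K) j) :=
  measurable_pi_lambda _ fun i => measurable_pi_apply (i + j)

lemma shiftT_zero (e : EnvSpace d K) : shiftT 0 e = e := by
  funext i
  simp [shiftT]

lemma measurePreserving_shiftT {P : Measure (EnvSpace d K)}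
    (hP : ∀ (j : ZLat d) (A : Set (EnvSpace d K)), MeasurableSet A → P (shiftT j ⁻¹' A) = P A)
    (j : ZLat d) : MeasurePreserving (shiftT j) P P :=
  ⟨measurable_shiftT j, Measure.ext fun A hA => by
    rw [Measure.map_apply (measurable_shiftT j) hA, hP j A hA]⟩

lemma measure_prod_singleton_eq_zero_iff {P : Measure (EnvSpace d K)} [IsFiniteMeasure P]
    {Q : Measure (EnvSpace d K × Bool)} {κ : ℝ} (hκ : 0 < κ)
    (hQ1 : ∀ A : Set (EnvSpace d K), MeasurableSet A →
      Q (A ×ˢ ({true} : Set Bool)) = ENNReal.ofReal κ * P A)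
    (hQ0 : ∀ A : Set (EnvSpace d K), MeasurableSet A →
      Q (A ×ˢ ({false} : Set Bool)) = ENNReal.ofReal (κ * ∫ e in A, Msize e 0 / Nsize e 0 ∂P))
    (b : Bool) {A : Set (EnvSpace d K)} (hA : MeasurableSet A) :
    Q (A ×ˢ {b}) = 0 ↔ P A = 0 := by
  cases b
  · have hI : 0 ≤ ∫ e in A, Msize e 0 / Nsize e 0 ∂P :=
      integral_nonneg fun e => (Msize_div_Nsize_pos e 0).le
    rw [hQ0 A hA, ENNReal.ofReal_eq_zero, ← setIntegral_eq_zero_iff_of_pos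
      (Msize_div_Nsize_pos · 0) (integrable_Msize_div_Nsize P 0).integrableOn]
    exact ⟨fun h => le_antisymm (by nlinarith) hI, fun h => by simp [h]⟩
  · rw [hQ1 A hA, mul_eq_zero, ENNReal.ofReal_eq_zero, or_iff_right (not_le.2 hκ)]

variable {a : ZLat d → ZLat d → ℝ} {lam : ℝ}

lemma cRate_nonneg (ha : ∀ i, 0 ≤ a 0 i) : 0 ≤ cRate a :=
  tsum_nonneg fun i => by split_ifs <;> simp [ha]

lemma hasSum_phat (hlam : 0 < lam) (hK : 2 ≤ K) (ha : ∀ i, 0 ≤ a 0 i) (ha_sum : Summable (a 0)) :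
    HasSum (phat a lam K) 1 := by
  have hoff : HasSum (fun i => if i = 0 then 0 else a 0 i) (cRate a) :=
    (ha_sum.of_nonneg_of_le (fun i => by split_ifs <;> simp [ha]) fun i => by
      split_ifs <;> simp [ha]).hasSum
  have hpos : 0 < cRate a + lam * K := by
    have : (0 : ℝ) < K := by exact_mod_cast (by omega : 0 < K)
    nlinarith [cRate_nonneg ha]
  have hsum := ((hasSum_ite_eq (0 : ZLat d) (lam * K)).add hoff).div_const (cRate a + lam * K)
  rw [add_comm (lam * K), div_self hpos.ne'] at hsum
  refine hsum.congr_fun fun i => ?_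
  by_cases hi : i = 0 <;> simp [phat, hi]

lemma phat_nonneg (hlam : 0 < lam) (ha : ∀ i, 0 ≤ a 0 i) (i : ZLat d) : 0 ≤ phat a lam K i := by
  have := cRate_nonneg ha
  unfold phat
  split_ifs <;> first | positivity | exact div_nonneg (ha i) (by positivity)

lemma qs_pos (hlam : 0 < lam) (ha : ∀ i, 0 ≤ a 0 i) : 0 < qs a lam K := by
  have := cRate_nonneg ha
  unfold qs
  positivity

lemma qs_le_one (hlam : 0 < lam) (ha : ∀ i, 0 ≤ a 0 i) : qs a lam K ≤ 1 := by
  have := cRate_nonneg ha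
  rw [qs, div_le_one (by positivity)]
  nlinarith [(Nat.cast_nonneg K : (0 : ℝ) ≤ K)]

lemma omegaE_nonneg (hlam : 0 < lam) (ha : ∀ i, 0 ≤ a 0 i) (e : EnvSpace d K) (i : ZLat d) :
    0 ≤ omegaE a lam e i := by
  have := cRate_nonneg ha
  have := two_le_Nsize e i
  have := two_le_Msize e i
  unfold omegaE
  positivity

lemma omegaE_le_half (hlam : 0 < lam) (ha : ∀ i, 0 ≤ a 0 i) (e : EnvSpace d K) (i : ZLat d) :
    omegaE a lam e i ≤ 1 / 2 := by
  have := cRate_nonneg ha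
  have hN := Nsize_le e i
  have hM := two_le_Msize e i
  unfold omegaE
  rw [div_le_div_iff₀ (by positivity) (by norm_num)]
  nlinarith [mul_le_mul_of_nonneg_left hN hlam.le,
    mul_le_mul_of_nonneg_right hM (by positivity : 0 ≤ cRate a + lam + lam * K)]

lemma ae_abs_active_le_of_eigen (hlam : 0 < lam) (hK : 2 ≤ K) (ha : ∀ i, 0 ≤ a 0 i)
    (ha_sum : Summable (a 0)) {P : Measure (EnvSpace d K)}
    (hP : ∀ j : ZLat d, MeasurePreserving (shiftT j) P P) {g : EnvSpace d K × Bool → ℝ}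
    (h₁ : ∀ᵐ e ∂P, Rop a lam g (e, true) = -g (e, true))
    (h₀ : ∀ᵐ e ∂P, Rop a lam g (e, false) = -g (e, false))
    {B : ℝ} (hB : ∀ᵐ e ∂P, |g (e, true)| ≤ B) :
    ∀ᵐ e ∂P, |g (e, true)| ≤ (1 - 2 / 3 * qs a lam K) * B := by
  have hshifts : ∀ᵐ e ∂P, ∀ j, |g (shiftT j e, true)| ≤ B :=
    ae_all_iff.2 fun j => (hP j).quasiMeasurePreserving.ae hB
  filter_upwards [h₁, h₀, hshifts] with e he₁ he₀ hj
  have hdormant : 3 * |g (e, false)| ≤ B :=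
    (three_mul_abs_le_of_lazy_eq_neg (omegaE_nonneg hlam ha e 0) (omegaE_le_half hlam ha e 0)
      he₀).trans (by simpa [shiftT_zero] using hj 0)
  have havg : |∑' j, phat a lam K j * g (shiftT j e, true)| ≤ B :=
    abs_tsum_mul_le_of_hasSum_one (phat_nonneg hlam ha) (hasSum_phat hlam hK ha ha_sum) hj
  have hq := qs_pos (K := K) hlam ha
  have hq₁ := qs_le_one (K := K) hlam ha
  rw [← abs_neg, ← he₁]
  calc |qs a lam K * g (e, false) + (1 - qs a lam K) * ∑' j, phat a lam K j * g (shiftT j e, true)|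
      ≤ qs a lam K * |g (e, false)| +
          (1 - qs a lam K) * |∑' j, phat a lam K j * g (shiftT j e, true)| := by
        refine (abs_add_le _ _).trans_eq ?_
        rw [abs_mul, abs_mul, abs_of_pos hq, abs_of_nonneg (sub_nonneg.2 hq₁)]
    _ ≤ qs a lam K * (B / 3) + (1 - qs a lam K) * B := by
        gcongr
        linarith
    _ = (1 - 2 / 3 * qs a lam K) * B := by ring

end Environment

theorem trivial_peripheral_point_spectrum_general
    (d K : ℕ) (hK : 2 ≤ K)
    (a : ZLat d → ZLat d → ℝ) (lam : ℝ) (hlam : 0 < lam)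
    (ha_nonneg : ∀ i j, 0 ≤ a i j)
    (ha_sum : Summable (a 0))
    (Pbar : Measure (EnvSpace d K)) [IsProbabilityMeasure Pbar]
    (hPinv : ∀ (j : ZLat d) (A : Set (EnvSpace d K)), MeasurableSet A →
      Pbar (shiftT j ⁻¹' A) = Pbar A)
    (Q : Measure (EnvSpace d K × Bool))
    (hQ1 : ∀ A : Set (EnvSpace d K), MeasurableSet A →
      Q (A ×ˢ ({true} : Set Bool)) =
        ENNReal.ofReal (1 / (1 + ∫ e', Msize e' 0 / Nsize e' 0 ∂Pbar)) * Pbar A)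
    (hQ0 : ∀ A : Set (EnvSpace d K), MeasurableSet A →
      Q (A ×ˢ ({false} : Set Bool)) =
        ENNReal.ofReal ((1 / (1 + ∫ e', Msize e' 0 / Nsize e' 0 ∂Pbar)) *
          ∫ e' in A, Msize e' 0 / Nsize e' 0 ∂Pbar))
    (g : EnvSpace d K × Bool → ℝ) (hgb : ∃ C, ∀ x, |g x| ≤ C)
    (heig : ∀ᵐ x ∂Q, Rop a lam g x = - g x) :
    ∀ᵐ x ∂Q, g x = 0 := by
  obtain ⟨C, hC⟩ := hgb
  have ha := ha_nonneg 0
  have hκ : 0 < 1 / (1 + ∫ e', Msize e' 0 / Nsize e' 0 ∂Pbar) := by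
    have : 0 ≤ ∫ e', Msize e' 0 / Nsize e' 0 ∂Pbar :=
      integral_nonneg fun e => (Msize_div_Nsize_pos e 0).le
    positivity
  have hnull : ∀ b A, MeasurableSet A → (Q (A ×ˢ {b}) = 0 ↔ Pbar A = 0) :=
    fun b _ hA => measure_prod_singleton_eq_zero_iff hκ hQ1 hQ0 b hA
  have hslice := (ae_iff_forall_ae_prodMk hnull).1 heig
  have hq := qs_pos (K := K) hlam ha
  have hactive : ∀ᵐ e ∂Pbar, g (e, true) = 0 :=
    ae_eq_zero_of_ae_abs_le_contract (by linarith [qs_le_one (K := K) hlam ha]) (by linarith)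
      (.of_forall fun e => hC _) fun B hB =>
        ae_abs_active_le_of_eigen hlam hK ha ha_sum (measurePreserving_shiftT hPinv)
          (hslice true) (hslice false) hB
  refine (ae_iff_forall_ae_prodMk hnull).2 fun b => ?_
  cases b
  · filter_upwards [hslice false, hactive] with e h₀ h₁
    have h₀' := three_mul_abs_le_of_lazy_eq_neg (omegaE_nonneg hlam ha e 0)
      (omegaE_le_half hlam ha e 0) h₀
    rw [h₁, abs_zero] at h₀'
    exact abs_nonpos_iff.1 (by linarith)
  · exact hactive

/-- Trivial peripheral point-spectrum of the environment-process operator. -/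
theorem trivial_peripheral_point_spectrum
    (d K : ℕ) (hd : 1 ≤ d) (hK : 2 ≤ K)
    (a : ZLat d → ZLat d → ℝ) (lam : ℝ) (hlam : 0 < lam)
    (ha_nonneg : ∀ i j, 0 ≤ a i j)
    (ha_transl : ∀ i j, a i j = a 0 (j - i))
    (ha_irr : ∀ i : ZLat d, ∃ n : ℕ, 0 < convPow (a 0) n i)
    (ha_sum : Summable (a 0))
    (ha00 : 0 < a 0 0)
    (Pbar : Measure (EnvSpace d K)) [IsProbabilityMeasure Pbar]
    (hPinv : ∀ (j : ZLat d) (A : Set (EnvSpace d K)), MeasurableSet A →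
      Pbar (shiftT j ⁻¹' A) = Pbar A)
    (hPerg : ∀ A : Set (EnvSpace d K), MeasurableSet A →
      (∀ j : ZLat d, shiftT j ⁻¹' A = A) → Pbar A = 0 ∨ Pbar A = 1)
    (Q : Measure (EnvSpace d K × Bool)) [IsProbabilityMeasure Q]
    (hQ1 : ∀ A : Set (EnvSpace d K), MeasurableSet A →
      Q (A ×ˢ ({true} : Set Bool)) =
        ENNReal.ofReal (1 / (1 + ∫ e', Msize e' 0 / Nsize e' 0 ∂Pbar)) * Pbar A)
    (hQ0 : ∀ A : Set (EnvSpace d K), MeasurableSet A →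
      Q (A ×ˢ ({false} : Set Bool)) =
        ENNReal.ofReal ((1 / (1 + ∫ e', Msize e' 0 / Nsize e' 0 ∂Pbar)) *
          ∫ e' in A, Msize e' 0 / Nsize e' 0 ∂Pbar))
    (hrec : ∑' n : ℕ, ENNReal.ofReal (convPow (phat a lam K) n 0) = ⊤)
    (g : EnvSpace d K × Bool → ℝ) (hg : Measurable g) (hgb : ∃ C, ∀ x, |g x| ≤ C)
    (heig : ∀ᵐ x ∂Q, Rop a lam g x = - g x) :
    ∀ᵐ x ∂Q, g x = 0 :=
  trivial_peripheral_point_spectrum_general d K hK a lam hlam ha_nonneg ha_sum Pbar hPinv Q hQ1 hQ0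
    g hgb heig
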